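/- arXiv:2204.00263 — 2 statements merged into one kernel-verified Lean document; each statement's English description precedes it below -/
import Mathlib

section
/- Let (X, d) be a bounded Polish space (i.e., d is a bounded metric) and q ∈ [1, ∞). Then for Borel probability measures μ_n, μ on X, convergence W_q(μ_n, μ) → 0 holds if and only if μ_n converges weakly to μ. -/
/-!
Weak convergence implies `W_q → 0`: partition `X` into countably many Borel sets `A i` of
diameter at most `e` whose frontiers are `μ`-null (disjointified balls around a dense sequence),
so that `μₙ (A i) → μ (A i)` by the portmanteau theorem. Coupling the mass
`min (μₙ (A i)) (μ (A i))` independently inside each `A i` with `i < N`, and the remaining mass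
independently on all of `X`, gives
`W_q(μₙ, μ) ^ q ≤ e ^ q + diam(X) ^ q * (1 - ∑ i < N, min (μₙ (A i)) (μ (A i)))`,
and the right-hand side tends to `e ^ q` as first `n → ∞` and then `N → ∞`.

Conversely, for an `L`-Lipschitz `f` and any coupling `π` of `μ` and `ν`,
`|∫ f dμ - ∫ f dν| ≤ L ∫ d dπ ≤ L (∫ d ^ q dπ) ^ (1 / q)` by Jensen, so `W_q → 0` makes the
integrals of all bounded Lipschitz functions converge, which characterizes weak convergence.
-/

open MeasureTheory ENNReal

noncomputable def wassersteinDist {X : Type*} [MetricSpace X] [MeasurableSpace X]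
    (q : ℝ) (μ ν : Measure X) : ℝ≥0∞ :=
  ⨅ (π : Measure (X × X)) (_ : π.map Prod.fst = μ) (_ : π.map Prod.snd = ν),
    (∫⁻ p, edist p.1 p.2 ^ q ∂π) ^ (1 / q)

open Filter Set Topology Metric Function BoundedContinuousFunction
open scoped NNReal

section Frontier

variable {X : Type*} [TopologicalSpace X]

lemma frontier_diff_subset_union (s t : Set X) : frontier (s \ t) ⊆ frontier s ∪ frontier t := by
  rw [sdiff_eq, ← frontier_compl t]
  exact (frontier_inter_subset s tᶜ).trans (union_subset_union inter_subset_left inter_subset_right)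

lemma frontier_partialSups_subset (B : ℕ → Set X) (n : ℕ) :
    frontier (partialSups B n) ⊆ ⋃ k ≤ n, frontier (B k) := by
  induction n with
  | zero => simp
  | succ n ih =>
    rw [biUnion_le_succ, show n + 1 = Order.succ n from rfl, partialSups_succ]
    exact (frontier_union_subset _ _).trans
      (union_subset_union (inter_subset_left.trans ih) inter_subset_right)

lemma frontier_disjointed_subset (B : ℕ → Set X) (n : ℕ) :
    frontier (disjointed B n) ⊆ ⋃ k ≤ n, frontier (B k) := by
  cases n with
  | zero => simp
  | succ n =>
    rw [biUnion_le_succ, show n + 1 = Order.succ n from rfl, disjointed_succ _ (not_isMax n),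
      union_comm]
    exact (frontier_diff_subset_union _ _).trans
      (union_subset_union_right _ (frontier_partialSups_subset B n))

end Frontier

lemma exists_partition_null_frontier_ediam_le {X : Type*} [PseudoMetricSpace X]
    [TopologicalSpace.SeparableSpace X] [Nonempty X] [MeasurableSpace X] [OpensMeasurableSpace X]
    (μ : Measure X) [SFinite μ] {e : ℝ} (he : 0 < e) :
    ∃ A : ℕ → Set X, (∀ i, MeasurableSet (A i)) ∧ Pairwise (Disjoint on A) ∧
      ⋃ i, A i = univ ∧ (∀ i, μ (frontier (A i)) = 0) ∧ ∀ i, ediam (A i) ≤ .ofReal e := by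
  obtain ⟨x, hx⟩ := TopologicalSpace.exists_dense_seq X
  choose r hr hr_null using fun i =>
    exists_null_frontier_thickening μ {x i} (show e / 4 < e / 2 by linarith)
  simp only [thickening_singleton] at hr_null
  refine ⟨disjointed fun i => ball (x i) (r i), .disjointed fun i => measurableSet_ball,
    disjoint_disjointed _, ?_, fun i => measure_mono_null (frontier_disjointed_subset _ i)
      ((measure_biUnion_null_iff (to_countable _)).2 fun k _ => hr_null k), fun i => ?_⟩
  · rw [iUnion_disjointed, eq_univ_iff_forall]
    intro y
    obtain ⟨i, hi⟩ := hx.exists_dist_lt y (show 0 < e / 4 by positivity)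
    exact mem_iUnion.2 ⟨i, mem_ball.2 (by linarith [(hr i).1])⟩
  · calc ediam (disjointed (fun i => ball (x i) (r i)) i) ≤ ediam (ball (x i) (r i)) :=
          ediam_mono (disjointed_subset _ i)
      _ ≤ 2 * .ofReal (r i) := by rw [← eball_ofReal]; exact ediam_eball_le
      _ ≤ .ofReal e := by
          rw [← ofReal_ofNat 2, ← ofReal_mul zero_le_two]
          exact ofReal_le_ofReal (by linarith [(hr i).2])

section Coupling

variable {X : Type*} [MeasurableSpace X]

noncomputable def indepCoupling (α β : Measure X) : Measure (X × X) :=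
  ((α univ)⁻¹ • α).prod β

lemma measure_univ_le_of_map_fst_le {π : Measure (X × X)} {μ : Measure X}
    (h : π.map Prod.fst ≤ μ) : π univ ≤ μ univ := by
  simpa [Measure.map_apply measurable_fst .univ] using h univ

variable {α β : Measure X} [IsFiniteMeasure α] [IsFiniteMeasure β]

instance : IsFiniteMeasure (indepCoupling α β) := by
  unfold indepCoupling
  infer_instance

lemma map_fst_indepCoupling (h : α univ = β univ) : (indepCoupling α β).map Prod.fst = α := by
  rcases eq_or_ne (α univ) 0 with h0 | h0
  · simp [Measure.measure_univ_eq_zero.1 h0, indepCoupling]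
  · rw [indepCoupling, Measure.map_fst_prod, smul_smul, ← h,
      ENNReal.mul_inv_cancel h0 (measure_ne_top _ _), one_smul]

lemma map_snd_indepCoupling (h : α univ = β univ) : (indepCoupling α β).map Prod.snd = β := by
  rcases eq_or_ne (α univ) 0 with h0 | h0
  · simp [Measure.measure_univ_eq_zero.1 (h ▸ h0), indepCoupling]
  · rw [indepCoupling, Measure.map_snd_prod, Measure.smul_apply, smul_eq_mul,
      ENNReal.inv_mul_cancel h0 (measure_ne_top _ _), one_smul]

lemma indepCoupling_apply_univ (h : α univ = β univ) : indepCoupling α β univ = α univ := by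
  conv_rhs => rw [← map_fst_indepCoupling h, Measure.map_apply measurable_fst .univ, preimage_univ]

lemma lintegral_edist_rpow_indepCoupling_le [PseudoEMetricSpace X] {A : Set X} {q : ℝ}
    (hq : 0 ≤ q) (h : α univ = β univ) (hα : ∀ᵐ x ∂α, x ∈ A) (hβ : ∀ᵐ x ∂β, x ∈ A) :
    ∫⁻ p, edist p.1 p.2 ^ q ∂indepCoupling α β ≤ ediam A ^ q * α univ := by
  have h₁ := ae_of_ae_map measurable_fst.aemeasurable ((map_fst_indepCoupling h).symm ▸ hα)
  have h₂ := ae_of_ae_map measurable_snd.aemeasurable ((map_snd_indepCoupling h).symm ▸ hβ)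
  calc ∫⁻ p, edist p.1 p.2 ^ q ∂indepCoupling α β
      ≤ ∫⁻ _, ediam A ^ q ∂indepCoupling α β := by
        refine lintegral_mono_ae ?_
        filter_upwards [h₁, h₂] with p hp₁ hp₂
        exact rpow_le_rpow (edist_le_ediam_of_mem hp₁ hp₂) hq
    _ = ediam A ^ q * α univ := by rw [lintegral_const, indepCoupling_apply_univ h]

lemma lintegral_edist_rpow_sum_indepCoupling_le [PseudoEMetricSpace X] {ι : Type*}
    {α β : ι → Measure X} [∀ i, IsFiniteMeasure (α i)] [∀ i, IsFiniteMeasure (β i)]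
    (h : ∀ i, α i univ = β i univ) {A : ι → Set X} (hα : ∀ i, ∀ᵐ x ∂α i, x ∈ A i)
    (hβ : ∀ i, ∀ᵐ x ∂β i, x ∈ A i) {e : ℝ≥0∞} (he : ∀ i, ediam (A i) ≤ e) {q : ℝ} (hq : 0 ≤ q)
    (s : Finset ι) :
    ∫⁻ p, edist p.1 p.2 ^ q ∂(∑ i ∈ s, indepCoupling (α i) (β i)) ≤ e ^ q * ∑ i ∈ s, α i univ := by
  rw [lintegral_finsetSum_measure, Finset.mul_sum]
  gcongr with i
  exact (lintegral_edist_rpow_indepCoupling_le hq (h i) (hα i) (hβ i)).trans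
    (by gcongr; exact he i)

end Coupling

section Restrict

variable {X : Type*} [MeasurableSpace X] {ρ : Measure X}

lemma div_smul_restrict_apply_univ {A : Set X} {m : ℝ≥0∞} (hm : m ≤ ρ A) (hA : ρ A ≠ ∞) :
    ((m / ρ A) • ρ.restrict A) univ = m := by
  rcases eq_or_ne (ρ A) 0 with h0 | h0
  · simp [le_antisymm (h0 ▸ hm) zero_le]
  · simp [ENNReal.div_mul_cancel h0 hA]

lemma sum_div_smul_restrict_le {ι : Type*} {A : ι → Set X} (hA : ∀ i, MeasurableSet (A i))
    (hd : Pairwise (Disjoint on A)) {m : ι → ℝ≥0∞} (hm : ∀ i, m i ≤ ρ (A i)) (s : Finset ι) :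
    ∑ i ∈ s, (m i / ρ (A i)) • ρ.restrict (A i) ≤ ρ :=
  calc ∑ i ∈ s, (m i / ρ (A i)) • ρ.restrict (A i) ≤ ∑ i ∈ s, ρ.restrict (A i) :=
        Finset.sum_le_sum fun i _ => Measure.le_iff'.2 fun t =>
          mul_le_of_le_one_left zero_le
            (ENNReal.div_le_of_le_mul ((hm i).trans_eq (one_mul _).symm))
    _ = ρ.restrict (⋃ i ∈ s, A i) := by
        rw [Measure.restrict_biUnion_finset (hd.set_pairwise _) hA,
          Measure.sum_coe_finset s fun i => ρ.restrict (A i)]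
    _ ≤ ρ := Measure.restrict_le_self

end Restrict

section Wasserstein

variable {X : Type*} [MetricSpace X] [MeasurableSpace X] {q : ℝ} {μ ν : Measure X}

lemma wassersteinDist_le_of_coupling {π : Measure (X × X)} (h₁ : π.map Prod.fst = μ)
    (h₂ : π.map Prod.snd = ν) :
    wassersteinDist q μ ν ≤ (∫⁻ p, edist p.1 p.2 ^ q ∂π) ^ (1 / q) :=
  iInf_le_of_le π <| iInf_le_of_le h₁ <| iInf_le _ h₂

lemma wassersteinDist_le_of_subcoupling [IsProbabilityMeasure μ] [IsProbabilityMeasure ν]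
    (hq : 0 < q) (π₀ : Measure (X × X)) [IsFiniteMeasure π₀] (h₁ : π₀.map Prod.fst ≤ μ)
    (h₂ : π₀.map Prod.snd ≤ ν) :
    wassersteinDist q μ ν ≤
      (∫⁻ p, edist p.1 p.2 ^ q ∂π₀ + ediam (univ : Set X) ^ q * (1 - π₀ univ)) ^ (1 / q) := by
  set α := μ - π₀.map Prod.fst
  set β := ν - π₀.map Prod.snd
  have hα : α univ = 1 - π₀ univ := by
    rw [Measure.sub_apply .univ h₁, measure_univ (μ := μ),
      Measure.map_apply measurable_fst .univ, preimage_univ]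
  have hαβ : α univ = β univ := by
    rw [hα, Measure.sub_apply .univ h₂, measure_univ (μ := ν),
      Measure.map_apply measurable_snd .univ, preimage_univ]
  refine (wassersteinDist_le_of_coupling (π := π₀ + indepCoupling α β) ?_ ?_).trans ?_
  · rw [Measure.map_add _ _ measurable_fst, map_fst_indepCoupling hαβ, add_comm,
      Measure.sub_add_cancel_of_le h₁]
  · rw [Measure.map_add _ _ measurable_snd, map_snd_indepCoupling hαβ, add_comm,
      Measure.sub_add_cancel_of_le h₂]
  · rw [lintegral_add_measure, ← hα]
    gcongr
    exact lintegral_edist_rpow_indepCoupling_le hq.le hαβ (.of_forall mem_univ)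
      (.of_forall mem_univ)

lemma wassersteinDist_le_of_partition [IsProbabilityMeasure μ] [IsProbabilityMeasure ν]
    (hq : 0 < q) {A : ℕ → Set X} (hA : ∀ i, MeasurableSet (A i)) (hd : Pairwise (Disjoint on A))
    {e : ℝ≥0∞} (he : ∀ i, ediam (A i) ≤ e) (N : ℕ) :
    wassersteinDist q μ ν ≤ (e ^ q + ediam (univ : Set X) ^ q *
      (1 - ∑ i ∈ Finset.range N, min (μ (A i)) (ν (A i)))) ^ (1 / q) := by
  set m := fun i => min (μ (A i)) (ν (A i))
  set α := fun i => (m i / μ (A i)) • μ.restrict (A i)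
  set β := fun i => (m i / ν (A i)) • ν.restrict (A i)
  have hm i : m i < ∞ := (min_le_left _ _).trans_lt (measure_lt_top _ _)
  have hα i : α i univ = m i :=
    div_smul_restrict_apply_univ (min_le_left _ _) (measure_ne_top _ _)
  have hβ i : β i univ = m i :=
    div_smul_restrict_apply_univ (min_le_right _ _) (measure_ne_top _ _)
  have hα_fin i : IsFiniteMeasure (α i) := ⟨(hα i).trans_lt (hm i)⟩
  have hβ_fin i : IsFiniteMeasure (β i) := ⟨(hβ i).trans_lt (hm i)⟩
  have hαβ i : α i univ = β i univ := (hα i).trans (hβ i).symm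
  set π₀ := ∑ i ∈ Finset.range N, indepCoupling (α i) (β i)
  have : IsFiniteMeasure π₀ := by simp only [π₀]; infer_instance
  have hπ₀ : π₀ univ = ∑ i ∈ Finset.range N, m i := by
    simp only [π₀, Measure.coe_finsetSum, Finset.sum_apply, indepCoupling_apply_univ (hαβ _), hα]
  have h₁ : π₀.map Prod.fst ≤ μ := by
    simp only [π₀, Measure.map_finset_sum measurable_fst.aemeasurable,
      map_fst_indepCoupling (hαβ _)]
    exact sum_div_smul_restrict_le hA hd (fun i => min_le_left _ _) _
  have h₂ : π₀.map Prod.snd ≤ ν := by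
    simp only [π₀, Measure.map_finset_sum measurable_snd.aemeasurable,
      map_snd_indepCoupling (hαβ _)]
    exact sum_div_smul_restrict_le hA hd (fun i => min_le_right _ _) _
  have hcost : ∫⁻ p, edist p.1 p.2 ^ q ∂π₀ ≤ e ^ q := by
    refine (lintegral_edist_rpow_sum_indepCoupling_le hαβ
      (fun i => Measure.ae_smul_measure (ae_restrict_mem (hA i)) _)
      (fun i => Measure.ae_smul_measure (ae_restrict_mem (hA i)) _) he hq.le _).trans ?_
    rw [Finset.sum_congr rfl fun i _ => hα i, ← hπ₀]
    exact mul_le_of_le_one_right zero_le ((measure_univ_le_of_map_fst_le h₁).trans_eq measure_univ)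
  refine (wassersteinDist_le_of_subcoupling hq π₀ h₁ h₂).trans ?_
  rw [← hπ₀]
  gcongr

end Wasserstein

lemma lintegral_le_rpow_lintegral_rpow {Y : Type*} [MeasurableSpace Y] {π : Measure Y}
    [IsProbabilityMeasure π] {g : Y → ℝ≥0∞} (hg : AEMeasurable g π) {q : ℝ} (hq : 1 ≤ q) :
    ∫⁻ y, g y ∂π ≤ (∫⁻ y, g y ^ q ∂π) ^ (1 / q) := by
  have h := eLpNorm_le_eLpNorm_of_exponent_le (p := 1) (q := .ofReal q)
    (by simpa using hq) hg.aestronglyMeasurable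
  rwa [eLpNorm_one_eq_lintegral_enorm, eLpNorm_eq_lintegral_rpow_enorm_toReal (by simp; linarith)
    ofReal_ne_top, toReal_ofReal (by linarith)] at h

section Lipschitz

variable {X : Type*} [MeasurableSpace X]

lemma edist_integral_le_of_coupling [PseudoMetricSpace X] [BorelSpace X] {f : X →ᵇ ℝ} {L : ℝ≥0}
    (hf : LipschitzWith L f) (π : Measure (X × X)) [IsFiniteMeasure π] :
    edist (∫ x, f x ∂π.map Prod.fst) (∫ x, f x ∂π.map Prod.snd) ≤
      L * ∫⁻ p, edist p.1 p.2 ∂π := by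
  have h₁ : Integrable (fun p : X × X => f p.1) π := (f.integrable _).comp_measurable measurable_fst
  have h₂ : Integrable (fun p : X × X => f p.2) π := (f.integrable _).comp_measurable measurable_snd
  rw [integral_map measurable_fst.aemeasurable f.continuous.aestronglyMeasurable,
    integral_map measurable_snd.aemeasurable f.continuous.aestronglyMeasurable,
    edist_eq_enorm_sub, ← integral_sub h₁ h₂, ← lintegral_const_mul' _ _ coe_ne_top]
  refine (enorm_integral_le_lintegral_enorm _).trans (lintegral_mono fun p => ?_)
  rw [← edist_eq_enorm_sub]
  exact hf p.1 p.2

variable [MetricSpace X] [SecondCountableTopology X] [BorelSpace X] {f : X →ᵇ ℝ} {L : ℝ≥0}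

lemma edist_integral_le_mul_wassersteinDist {q : ℝ} (hq : 1 ≤ q) {μ ν : Measure X}
    [IsProbabilityMeasure μ] (hL : L ≠ 0) (hf : LipschitzWith L f) :
    edist (∫ x, f x ∂μ) (∫ x, f x ∂ν) ≤ L * wassersteinDist q μ ν := by
  simp only [wassersteinDist, ENNReal.mul_iInf_of_ne (coe_ne_zero.2 hL) coe_ne_top, le_iInf_iff]
  rintro π rfl rfl
  have := Measure.isProbabilityMeasure_of_map (μ := π) Prod.fst
  refine (edist_integral_le_of_coupling hf π).trans ?_
  gcongr
  exact lintegral_le_rpow_lintegral_rpow measurable_edist.aemeasurable hq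

theorem tendsto_of_tendsto_wassersteinDist {ι : Type*} {l : Filter ι}
    [l.IsCountablyGenerated] {q : ℝ} (hq : 1 ≤ q) {μs : ι → ProbabilityMeasure X}
    {μ : ProbabilityMeasure X}
    (h : Tendsto (fun i => wassersteinDist q (μs i : Measure X) μ) l (𝓝 0)) :
    Tendsto μs l (𝓝 μ) := by
  refine tendsto_iff_forall_lipschitz_integral_tendsto.2 fun g ⟨C, hC⟩ ⟨K, hK⟩ => ?_
  let f : X →ᵇ ℝ := .mkOfBound ⟨g, hK.continuous⟩ C hC
  have hf : LipschitzWith (K + 1) f := hK.weaken (le_add_of_nonneg_right zero_le_one)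
  have hW : Tendsto (fun i => ((K + 1 : ℝ≥0) : ℝ≥0∞) * wassersteinDist q (μs i : Measure X) μ) l
      (𝓝 0) := by
    simpa using ENNReal.Tendsto.const_mul (a := ((K + 1 : ℝ≥0) : ℝ≥0∞)) h (.inr coe_ne_top)
  rw [tendsto_iff_edist_tendsto_0]
  exact tendsto_of_tendsto_of_tendsto_of_le_of_le tendsto_const_nhds hW (fun _ => zero_le)
    fun i => edist_integral_le_mul_wassersteinDist (f := f) hq (by positivity) hf

end Lipschitz
section Converse

variable {X : Type*} [MetricSpace X] [TopologicalSpace.SeparableSpace X] [BoundedSpace X]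
  [MeasurableSpace X] [BorelSpace X] {ι : Type*} {l : Filter ι} {q : ℝ} {μs : ι → Measure X}
  {μ : Measure X} [∀ i, IsProbabilityMeasure (μs i)] [IsProbabilityMeasure μ]

lemma limsup_wassersteinDist_le [l.NeBot] (hq : 0 < q)
    (h : ∀ E, μ (frontier E) = 0 → Tendsto (fun i => μs i E) l (𝓝 (μ E))) {e : ℝ} (he : 0 < e) :
    limsup (fun i => wassersteinDist q (μs i) μ) l ≤ .ofReal e := by
  have := nonempty_of_isProbabilityMeasure μ
  obtain ⟨A, hA, hd, hcover, hfr, hdiam⟩ := exists_partition_null_frontier_ediam_le μ he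
  set Φ : ℝ≥0∞ → ℝ≥0∞ := fun t => (.ofReal e ^ q + ediam (univ : Set X) ^ q * (1 - t)) ^ (1 / q)
  have hΦ : Continuous Φ := ENNReal.continuous_rpow_const.comp <| continuous_const.add <|
    (ENNReal.continuous_const_mul (rpow_ne_top_of_nonneg hq.le
      BoundedSpace.bounded_univ.ediam_ne_top)).comp (ENNReal.continuous_sub_left one_ne_top)
  have hΦ1 : Φ 1 = .ofReal e := by
    simp only [Φ, tsub_self, mul_zero, add_zero, ← rpow_mul, mul_one_div_cancel hq.ne', rpow_one]
  have hsum : Tendsto (fun N => ∑ k ∈ Finset.range N, μ (A k)) atTop (𝓝 1) := by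
    simpa [← measure_iUnion hd hA, hcover] using ENNReal.tendsto_nat_tsum fun k => μ (A k)
  refine ge_of_tendsto (hΦ1 ▸ (hΦ.tendsto 1).comp hsum) (.of_forall fun N => ?_)
  have hmin : Tendsto (fun i => ∑ k ∈ Finset.range N, min (μs i (A k)) (μ (A k))) l
      (𝓝 (∑ k ∈ Finset.range N, μ (A k))) :=
    tendsto_finsetSum _ fun k _ => by
      simpa using (h _ (hfr k)).min (tendsto_const_nhds (x := μ (A k)))
  calc limsup (fun i => wassersteinDist q (μs i) μ) l
      ≤ limsup (fun i => Φ (∑ k ∈ Finset.range N, min (μs i (A k)) (μ (A k)))) l :=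
        limsup_le_limsup (.of_forall fun i => wassersteinDist_le_of_partition hq hA hd hdiam N)
    _ = Φ (∑ k ∈ Finset.range N, μ (A k)) := ((hΦ.tendsto _).comp hmin).limsup_eq

theorem tendsto_wassersteinDist_of_forall_null_frontier (hq : 0 < q)
    (h : ∀ E, μ (frontier E) = 0 → Tendsto (fun i => μs i E) l (𝓝 (μ E))) :
    Tendsto (fun i => wassersteinDist q (μs i) μ) l (𝓝 0) := by
  rcases l.eq_or_neBot with rfl | _
  · exact tendsto_bot
  have hofReal : Tendsto ENNReal.ofReal (𝓝[>] 0) (𝓝 0) :=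
    ENNReal.ofReal_zero ▸ (ENNReal.continuous_ofReal.tendsto 0).mono_left nhdsWithin_le_nhds
  exact tendsto_of_le_liminf_of_limsup_le zero_le (ge_of_tendsto hofReal
    (eventually_nhdsWithin_of_forall fun e he => limsup_wassersteinDist_le hq h he))

end Converse

/-- On a bounded Polish space, convergence in the Wasserstein distance of order `q`
is equivalent to weak convergence. -/
theorem tendsto_wasserstein_iff_weak {X : Type*} [MetricSpace X] [PolishSpace X]
    [BoundedSpace X] [MeasurableSpace X] [BorelSpace X]
    (q : ℝ) (hq : 1 ≤ q) (μs : ℕ → Measure X) (μ : Measure X)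
    [∀ n, IsProbabilityMeasure (μs n)] [IsProbabilityMeasure μ] :
    Filter.Tendsto (fun n => wassersteinDist q (μs n) μ) Filter.atTop (nhds 0) ↔
      ∀ f : BoundedContinuousFunction X ℝ,
        Filter.Tendsto (fun n => ∫ x, f x ∂(μs n)) Filter.atTop
          (nhds (∫ x, f x ∂μ)) := by
  let P n : ProbabilityMeasure X := ⟨μs n, inferInstance⟩
  let P₀ : ProbabilityMeasure X := ⟨μ, inferInstance⟩
  refine Iff.trans ?_ (ProbabilityMeasure.tendsto_iff_forall_integral_tendsto (μs := P) (μ := P₀))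
  refine ⟨tendsto_of_tendsto_wassersteinDist (μs := P) (μ := P₀) hq, fun h => ?_⟩
  exact tendsto_wassersteinDist_of_forall_null_frontier (by linarith) fun E hE =>
    ProbabilityMeasure.tendsto_measure_of_null_frontier_of_tendsto' (μs := P) (μ := P₀) h hE
end

section
/- Let v : M → ℝ with ‖v‖_∞ < ∞, T : M → M a map, and define for n ≥ 1 the quantity Z_n = max_{0 ≤ i, l ≤ √n} |Σ_{j=i⌈√n⌉}^{i⌈√n⌉+l−1} v ∘ T^j| (blocks of length at most √n starting at multiples of √n). Then for all integers 0 ≤ a < b ≤ n, |Σ_{j=a}^{b−1} v ∘ T^j| ≤ Z_n ((b − a)(n^{1/2} − 1)^{−1} + 3). -/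
/-!
Cut `[a, b)` at the multiples of `s = ⌈√n⌉`: writing `∑_{[a,b)} = ∑_{[⌊a/s⌋s, b)} - ∑_{[⌊a/s⌋s, a)}`,
the first sum consists of `⌊b/s⌋ - ⌊a/s⌋` full blocks and one partial block, the second of one
partial block, and every block starts at `i s` with `i ≤ ⌊b/s⌋ ≤ s` since `b ≤ n ≤ s²`. The number
of full blocks beyond the first is at most `(b - a)/s ≤ (b - a)/(√n - 1)`.
-/

open Finset

theorem Finset.le_ciSup_of_mem {ι α : Type*} [ConditionallyCompleteLattice α] (t : Finset ι)
    (f : ι → α) {i : ι} (hi : i ∈ t) : f i ≤ ⨆ j ∈ t, f j :=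
  le_ciSup₂ (f := fun j (_ : j ∈ t) => f j)
    ((t.finite_toSet.image f).bddAbove.mono (Set.iUnion_subset fun j => by
      rintro _ ⟨hj, rfl⟩; exact ⟨j, hj, rfl⟩)) i hi

section BlockSums

variable (f : ℕ → ℝ) {s N : ℕ} {Z : ℝ}
  (hZ : ∀ c ≤ N, ∀ l ≤ s, |∑ j ∈ Ico (c * s) (c * s + l), f j| ≤ Z)
include hZ

theorem abs_sum_Ico_mul_mul_le {p q : ℕ} (hpq : p ≤ q) (hqN : q ≤ N) :
    |∑ j ∈ Ico (p * s) (q * s), f j| ≤ ((q : ℝ) - p) * Z := by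
  induction q, hpq using Nat.le_induction with
  | base => simp
  | succ q hpq ih =>
    rw [← sum_Ico_consecutive f (Nat.mul_le_mul_right s hpq) (Nat.mul_le_mul_right s q.le_succ),
      Nat.succ_mul]
    calc _ ≤ |∑ j ∈ Ico (p * s) (q * s), f j| + |∑ j ∈ Ico (q * s) (q * s + s), f j| :=
          abs_add_le _ _
      _ ≤ ((q : ℝ) - p) * Z + Z := add_le_add (ih (by omega)) (hZ q (by omega) s le_rfl)
      _ = _ := by push_cast; ring

theorem abs_sum_Ico_mul_le (hs : 0 < s) {p m : ℕ} (hp : p ≤ m / s) (hm : m / s ≤ N) :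
    |∑ j ∈ Ico (p * s) m, f j| ≤ ((m / s : ℕ) - p + 1 : ℝ) * Z := by
  rw [← sum_Ico_consecutive f (Nat.mul_le_mul_right s hp) (Nat.div_mul_le_self m s)]
  calc _ ≤ |∑ j ∈ Ico (p * s) (m / s * s), f j| + |∑ j ∈ Ico (m / s * s) m, f j| :=
        abs_add_le _ _
    _ ≤ ((m / s : ℕ) - p : ℝ) * Z + Z := by
        refine add_le_add (abs_sum_Ico_mul_mul_le f hZ hp hm) ?_
        have hlast := hZ _ hm _ (Nat.mod_lt m hs).le
        rwa [Nat.div_add_mod'] at hlast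
    _ = _ := by ring

theorem abs_sum_Ico_le (hs : 0 < s) {a b : ℕ} (hab : a ≤ b) (hb : b / s ≤ N) :
    |∑ j ∈ Ico a b, f j| ≤ ((b / s : ℕ) - (a / s : ℕ) + 2 : ℝ) * Z := by
  have ha : a / s ≤ b / s := Nat.div_le_div_right hab
  have hstart : a / s * s ≤ a := Nat.div_mul_le_self a s
  rw [← add_sub_cancel_left (∑ j ∈ Ico (a / s * s) a, f j) (∑ j ∈ Ico a b, f j),
    sum_Ico_consecutive f hstart hab]
  calc _ ≤ |∑ j ∈ Ico (a / s * s) b, f j| + |∑ j ∈ Ico (a / s * s) a, f j| := abs_sub _ _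
    _ ≤ ((b / s : ℕ) - (a / s : ℕ) + 1 : ℝ) * Z + ((a / s : ℕ) - (a / s : ℕ) + 1 : ℝ) * Z :=
        add_le_add (abs_sum_Ico_mul_le f hZ hs ha hb)
          (abs_sum_Ico_mul_le f hZ hs le_rfl (ha.trans hb))
    _ = _ := by ring

end BlockSums

theorem div_sub_div_sub_one_le {s a b : ℕ} {t : ℝ} (ht : 0 < t) (hts : t ≤ s) (hab : a ≤ b) :
    ((b / s : ℕ) - (a / s : ℕ) - 1 : ℝ) ≤ ((b : ℝ) - a) / t := by
  have hs : 0 < s := by exact_mod_cast ht.trans_le hts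
  have hb : ((b / s * s : ℕ) : ℝ) ≤ b := by exact_mod_cast Nat.div_mul_le_self b s
  have ha : (a : ℝ) < ((a / s * s + s : ℕ) : ℝ) := by exact_mod_cast Nat.lt_div_mul_add hs
  have hab' : (a : ℝ) ≤ b := by exact_mod_cast hab
  push_cast at hb ha
  rw [le_div_iff₀ ht]
  rcases le_total 0 ((b / s : ℕ) - (a / s : ℕ) - 1 : ℝ) with hk | hk <;> nlinarith

theorem birkhoff_sum_block_bound_general {M : Type*} (T : M → M) (v : M → ℝ)
    (n : ℕ) (hn : 4 ≤ n) (x : M) (a b : ℕ) (hab : a < b) (hbn : b ≤ n) :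
    |∑ j ∈ Finset.Ico a b, v (T^[j] x)| ≤
      (⨆ i ∈ Finset.Iic (Nat.ceil (Real.sqrt n)),
        ⨆ l ∈ Finset.Iic (Nat.ceil (Real.sqrt n)),
          |∑ j ∈ Finset.Ico (i * Nat.ceil (Real.sqrt n))
              (i * Nat.ceil (Real.sqrt n) + l), v (T^[j] x)|)
        * ((b - a : ℝ) * ((n : ℝ) ^ ((1 : ℝ) / 2) - 1)⁻¹ + 3) := by
  set s := ⌈√(n : ℝ)⌉₊
  set Z := ⨆ i ∈ Iic s, ⨆ l ∈ Iic s, |∑ j ∈ Ico (i * s) (i * s + l), v (T^[j] x)|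
  have hblock : ∀ c ≤ s, ∀ l ≤ s, |∑ j ∈ Ico (c * s) (c * s + l), v (T^[j] x)| ≤ Z :=
    fun c hc l hl =>
      ((Iic s).le_ciSup_of_mem (fun l => |∑ j ∈ Ico (c * s) (c * s + l), v (T^[j] x)|)
        (mem_Iic.2 hl)).trans
      ((Iic s).le_ciSup_of_mem
        (fun i => ⨆ l ∈ Iic s, |∑ j ∈ Ico (i * s) (i * s + l), v (T^[j] x)|) (mem_Iic.2 hc))
  have hZ : 0 ≤ Z := by simpa using hblock 0 (Nat.zero_le _) 0 (Nat.zero_le _)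
  have hsqrt : 2 ≤ √(n : ℝ) := Real.le_sqrt_of_sq_le (by exact_mod_cast (by omega : 2 ^ 2 ≤ n))
  have hsqrt_le : √(n : ℝ) ≤ s := Nat.le_ceil _
  have hs : 0 < s := by exact_mod_cast (by linarith : (0 : ℝ) < s)
  have hbs : b / s ≤ s := by
    refine Nat.div_le_of_le_mul (hbn.trans ?_)
    exact_mod_cast (Real.sqrt_le_left (Nat.cast_nonneg s)).1 hsqrt_le |>.trans_eq (sq _)
  have hcount := div_sub_div_sub_one_le (by linarith) (by linarith : √(n : ℝ) - 1 ≤ s) hab.le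
  rw [← Real.sqrt_eq_rpow, ← div_eq_mul_inv]
  calc _ ≤ ((b / s : ℕ) - (a / s : ℕ) + 2 : ℝ) * Z := abs_sum_Ico_le _ hblock hs hab.le hbs
    _ ≤ _ := by rw [mul_comm]; exact mul_le_mul_of_nonneg_left (by linarith) hZ

/-- Block decomposition bound for Birkhoff sums: with
`Z_n = max_{0 ≤ i, l ≤ ⌈√n⌉} |Σ_{j=i⌈√n⌉}^{i⌈√n⌉+l-1} v ∘ T^j|`, every Birkhoff sum
over a window `[a, b) ⊆ [0, n]` satisfies
`|Σ_{j=a}^{b-1} v ∘ T^j| ≤ Z_n ((b-a)(n^{1/2} - 1)⁻¹ + 3)`. -/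
theorem birkhoff_sum_block_bound {M : Type*} (T : M → M) (v : M → ℝ)
    (Cv : ℝ) (hv : ∀ x, |v x| ≤ Cv)
    (n : ℕ) (hn : 4 ≤ n) (x : M) (a b : ℕ) (hab : a < b) (hbn : b ≤ n) :
    |∑ j ∈ Finset.Ico a b, v (T^[j] x)| ≤
      (⨆ i ∈ Finset.Iic (Nat.ceil (Real.sqrt n)),
        ⨆ l ∈ Finset.Iic (Nat.ceil (Real.sqrt n)),
          |∑ j ∈ Finset.Ico (i * Nat.ceil (Real.sqrt n))
              (i * Nat.ceil (Real.sqrt n) + l), v (T^[j] x)|)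
        * ((b - a : ℝ) * ((n : ℝ) ^ ((1 : ℝ) / 2) - 1)⁻¹ + 3) :=
  birkhoff_sum_block_bound_general T v n hn x a b hab hbn
end
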